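/- Let ℓ ≥ 1 be an integer and p ∈ (0, 1/2] satisfy p·ℓ ≤ 1/32, and let M be an n×n Bernoulli(p) random matrix. Then with probability at least 1 − 2·binom(n, ℓ)·exp(−nℓp/4), for every J ⊆ {1,…,n} with |J| = ℓ one has ℓpn/16 ≤ |I(J, M)| ≤ 2ℓnp, where I(J, M) := {i ≤ n : the i-th row of M has exactly one entry equal to 1 among the components indexed by J}. -/

import Mathlib

open MeasureTheory

/-- `M` is a random `n × n` matrix with i.i.d. Bernoulli(p) entries. -/
def IsBernoulliMatrix {Ω : Type*} [MeasurableSpace Ω] (μ : Measure Ω) {n : ℕ}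
    (M : Ω → Matrix (Fin n) (Fin n) ℝ) (p : ℝ) : Prop :=
  (∀ ω i j, M ω i j = 0 ∨ M ω i j = 1) ∧
  ∀ A : Matrix (Fin n) (Fin n) ℝ, (∀ i j, A i j = 0 ∨ A i j = 1) →
    μ {ω | M ω = A} =
      ENNReal.ofReal
        (p ^ (Finset.univ.filter (fun ij : Fin n × Fin n => A ij.1 ij.2 = 1)).card *
          (1 - p) ^ (Finset.univ.filter (fun ij : Fin n × Fin n => A ij.1 ij.2 = 0)).card)

/-!
For a fixed column set `J`, the rows of `M` are independent and each of them has exactly one `1`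
in the columns `J` with probability `q = ℓ p (1 - p) ^ (ℓ - 1)`, which lies in `[31 ℓ p / 32, ℓ p]`
when `ℓ p ≤ 1/32`. So `|I(J, M)|` is binomial with parameters `n` and `q`, and the exponential
Markov inequality with `e ^ (± |I(J, M)|)` bounds each of its two tails by `exp (-n ℓ p / 4)`.
A union bound over the `n.choose ℓ` sets `J` concludes. All probabilities are computed on the
finite set of `0/1` patterns, on which the law of `M` is explicit.
-/

open Finset

section Chernoff

/-- Exponential Markov inequality: `t ≥ 0` bounds an upper tail of `N`, `t ≤ 0` a lower one. -/
theorem sum_le_exp_mul_sum_mul_exp {β : Type*} [Fintype β] {W : β → ℝ} (hW : ∀ b, 0 ≤ W b)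
    (N : β → ℝ) {s : Finset β} {t a : ℝ} (hs : ∀ b ∈ s, t * a ≤ t * N b) :
    ∑ b ∈ s, W b ≤ Real.exp (-(t * a)) * ∑ b, W b * Real.exp (t * N b) := by
  rw [mul_sum]
  calc ∑ b ∈ s, W b ≤ ∑ b ∈ s, Real.exp (-(t * a)) * (W b * Real.exp (t * N b)) := by
        refine sum_le_sum fun b hb => ?_
        have : 1 ≤ Real.exp (-(t * a)) * Real.exp (t * N b) := by
          rw [← Real.exp_add]; exact Real.one_le_exp (by linarith [hs b hb])
        nlinarith [hW b]
    _ ≤ _ := sum_le_sum_of_subset_of_nonneg (subset_univ s) fun b _ _ => by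
        have := hW b; positivity

variable {ι α : Type*} [Fintype ι] [DecidableEq ι] [Fintype α]

theorem sum_prod_mul_exp_card_filter (ρ : α → ℝ) (P : α → Prop) [DecidablePred P] (t : ℝ) :
    ∑ f : ι → α, (∏ i, ρ (f i)) * Real.exp (t * #{i | P (f i)}) =
      (∑ x, ρ x + (∑ x with P x, ρ x) * (Real.exp t - 1)) ^ Fintype.card ι := by
  have hfactor : ∀ f : ι → α, (∏ i, ρ (f i)) * Real.exp (t * #{i | P (f i)}) =
      ∏ i, ρ (f i) * (if P (f i) then Real.exp t else 1) := by
    intro f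
    rw [card_filter, Nat.cast_sum, mul_sum, Real.exp_sum, ← prod_mul_distrib]
    refine prod_congr rfl fun i _ => ?_
    split_ifs <;> simp [*]
  have hrow : ∑ x, ρ x * (if P x then Real.exp t else 1) =
      ∑ x, ρ x + (∑ x with P x, ρ x) * (Real.exp t - 1) := by
    rw [sum_filter, sum_mul, ← sum_add_distrib]
    refine sum_congr rfl fun x _ => ?_
    split_ifs <;> ring
  simp_rw [hfactor]
  rw [← Fintype.prod_sum (fun (_ : ι) x => ρ x * if P x then Real.exp t else 1), hrow,
    prod_const, card_univ]

theorem sum_prod_le_exp_chernoff {ρ : α → ℝ} (hρ : ∀ x, 0 ≤ ρ x) (hρ1 : ∑ x, ρ x = 1)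
    (P : α → Prop) [DecidablePred P] {s : Finset (ι → α)} {t a : ℝ}
    (hs : ∀ f ∈ s, t * a ≤ t * #{i | P (f i)}) :
    ∑ f ∈ s, ∏ i, ρ (f i) ≤
      Real.exp (-(t * a) + Fintype.card ι * (∑ x with P x, ρ x) * (Real.exp t - 1)) := by
  set q := ∑ x with P x, ρ x
  have hq1 : q ≤ 1 := hρ1 ▸ sum_le_sum_of_subset_of_nonneg (filter_subset _ _) fun x _ _ => hρ x
  have hq0 : 0 ≤ q := sum_nonneg fun x _ => hρ x
  have hmgf : (1 + q * (Real.exp t - 1)) ^ Fintype.card ι ≤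
      Real.exp (Fintype.card ι * (q * (Real.exp t - 1))) := by
    rw [Real.exp_nat_mul]
    refine pow_le_pow_left₀ ?_ (by linarith [Real.add_one_le_exp (q * (Real.exp t - 1))]) _
    nlinarith [Real.exp_pos t]
  calc ∑ f ∈ s, ∏ i, ρ (f i)
      ≤ Real.exp (-(t * a)) * ∑ f : ι → α, (∏ i, ρ (f i)) * Real.exp (t * #{i | P (f i)}) :=
        sum_le_exp_mul_sum_mul_exp (fun f => prod_nonneg fun i _ => hρ _) _ hs
    _ = Real.exp (-(t * a)) * (1 + q * (Real.exp t - 1)) ^ Fintype.card ι := by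
        rw [sum_prod_mul_exp_card_filter, hρ1]
    _ ≤ _ := by
        rw [mul_assoc, Real.exp_add]
        gcongr

end Chernoff

section Bernoulli

variable {p : ℝ}

def bernoulliWeight (p : ℝ) (b : Bool) : ℝ := if b then p else 1 - p

lemma bernoulliWeight_nonneg (hp0 : 0 ≤ p) (hp1 : p ≤ 1) (b : Bool) :
    0 ≤ bernoulliWeight p b := by
  cases b <;> simp [bernoulliWeight] <;> linarith

variable {ι : Type*} [DecidableEq ι]

lemma card_filter_eq_one_iff {J : Finset ι} {r : ι → Bool} :
    #{j ∈ J | r j} = 1 ↔ ∃ j₀ ∈ J, ∀ j ∈ J, r j = decide (j = j₀) := by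
  rw [card_eq_one]
  constructor
  · rintro ⟨j₀, hj₀⟩
    have hmem : ∀ j, j ∈ J ∧ r j = true ↔ j = j₀ := by
      simpa [Finset.ext_iff] using hj₀
    refine ⟨j₀, ((hmem j₀).2 rfl).1, fun j hj => ?_⟩
    rw [Bool.eq_iff_iff, decide_eq_true_iff, ← hmem j, and_iff_right hj]
  · rintro ⟨j₀, hj₀, hr⟩
    refine ⟨j₀, Finset.ext fun j => ?_⟩
    by_cases hj : j ∈ J
    · simp [hj, hr j hj]
    · simpa [hj] using (ne_of_mem_of_not_mem hj₀ hj).symm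

variable [Fintype ι]

lemma sum_prod_bernoulliWeight :
    ∑ r : ι → Bool, ∏ j, bernoulliWeight p (r j) = 1 := by
  rw [← Fintype.prod_sum (fun (_ : ι) b => bernoulliWeight p b)]
  simp [bernoulliWeight]

lemma sum_prod_bernoulliWeight_card_filter_eq_one (J : Finset ι) :
    ∑ r : ι → Bool with #{j ∈ J | r j} = 1, ∏ j, bernoulliWeight p (r j) =
      #J * p * (1 - p) ^ (#J - 1) := by
  set t : ι → ι → Finset Bool := fun j₀ j => if j ∈ J then {decide (j = j₀)} else univ
  have hmem_t : ∀ j₀ r, r ∈ Fintype.piFinset (t j₀) ↔ ∀ j ∈ J, r j = decide (j = j₀) := by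
    intro j₀ r
    simp only [Fintype.mem_piFinset, t]
    refine forall_congr' fun j => ?_
    split_ifs with hj <;> simp [hj]
  have hcover : ({r : ι → Bool | #{j ∈ J | r j} = 1} : Finset _) =
      J.biUnion fun j₀ => Fintype.piFinset (t j₀) := by
    ext r
    simp [card_filter_eq_one_iff, hmem_t]
  have hdisj : (J : Set ι).PairwiseDisjoint fun j₀ => Fintype.piFinset (t j₀) := by
    intro j₀ hj₀ j₁ _ hne
    refine disjoint_left.2 fun r h₀ h₁ => ?_
    have e₀ := (hmem_t j₀ r).1 h₀ j₀ hj₀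
    have e₁ := (hmem_t j₁ r).1 h₁ j₀ hj₀
    simp_all
  have hpiece : ∀ j₀ ∈ J, ∑ r ∈ Fintype.piFinset (t j₀), ∏ j, bernoulliWeight p (r j) =
      p * (1 - p) ^ (#J - 1) := by
    intro j₀ hj₀
    have hcolumn : ∀ j, ∑ b ∈ t j₀ j, bernoulliWeight p b =
        if j ∈ J then bernoulliWeight p (decide (j = j₀)) else 1 := by
      intro j
      split_ifs with hj <;> simp [t, hj, bernoulliWeight]
    rw [← prod_univ_sum, prod_congr rfl fun j _ => hcolumn j, Fintype.prod_ite_mem,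
      ← mul_prod_erase J _ hj₀,
      prod_congr rfl fun j hj => by rw [decide_eq_false (ne_of_mem_erase hj)], prod_const,
      card_erase_of_mem hj₀]
    simp [bernoulliWeight]
  rw [hcover, sum_biUnion hdisj, sum_congr rfl hpiece, sum_const, nsmul_eq_mul, mul_assoc]

end Bernoulli

section PatternTails

/-- The set `I(J, M)` of the paper, where `f` is the `0/1` pattern of `M`. -/
def singleHitRows {ι κ : Type*} [Fintype ι] [DecidableEq κ] (J : Finset κ) (f : ι → κ → Bool) :
    Finset ι :=
  {i | #{j ∈ J | f i j} = 1}

variable {p : ℝ} {ι κ : Type*} [Fintype ι] [DecidableEq ι] [Fintype κ] [DecidableEq κ]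

lemma one_sub_mul_le_pow_pred (hp0 : 0 ≤ p) (hp1 : p ≤ 1) (l : ℕ) :
    1 - l * p ≤ (1 - p) ^ (l - 1) := by
  have hpred : ((l - 1 : ℕ) : ℝ) ≤ l := by exact_mod_cast Nat.sub_le l 1
  calc 1 - l * p ≤ 1 + ((l - 1 : ℕ) : ℝ) * (-p) := by nlinarith
    _ ≤ (1 + -p) ^ (l - 1) := one_add_mul_le_pow (by linarith) _
    _ = (1 - p) ^ (l - 1) := by rw [← sub_eq_add_neg]

lemma sum_bernoulliWeight_card_singleHitRows_le (hp0 : 0 ≤ p) (hp1 : p ≤ 1) {J : Finset κ}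
    (hJp : #J * p ≤ 1 / 32) :
    ∑ f : ι → κ → Bool with #(singleHitRows J f) ≤ #J * p * Fintype.card ι / 16,
      ∏ i, ∏ j, bernoulliWeight p (f i j) ≤ Real.exp (-(Fintype.card ι * #J * p / 4)) := by
  have hρ : ∀ r : κ → Bool, 0 ≤ ∏ j, bernoulliWeight p (r j) := fun r =>
    prod_nonneg fun j _ => bernoulliWeight_nonneg hp0 hp1 _
  refine (sum_prod_le_exp_chernoff hρ sum_prod_bernoulliWeight
    (fun r => #{j ∈ J | r j} = 1) (t := -1) (a := #J * p * Fintype.card ι / 16) ?_).trans ?_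
  · intro f hf
    simpa [singleHitRows] using (mem_filter.1 hf).2
  rw [sum_prod_bernoulliWeight_card_filter_eq_one, Real.exp_le_exp]
  have hpow := one_sub_mul_le_pow_pred hp0 hp1 #J
  have hexp : Real.exp (-1) ≤ 1 / 2 := by
    rw [Real.exp_neg, inv_le_comm₀ (Real.exp_pos 1) (by norm_num)]
    linarith [Real.add_one_le_exp 1]
  have hm : (0 : ℝ) ≤ Fintype.card ι := Nat.cast_nonneg _
  have hlp : (0 : ℝ) ≤ #J * p := mul_nonneg (Nat.cast_nonneg _) hp0
  have hq : #J * p * (31 / 32) ≤ #J * p * (1 - p) ^ (#J - 1) := by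
    nlinarith
  nlinarith [mul_nonneg hm hlp, mul_le_mul_of_nonneg_left hq hm]

lemma sum_bernoulliWeight_le_card_singleHitRows (hp0 : 0 ≤ p) (hp1 : p ≤ 1) (J : Finset κ) :
    ∑ f : ι → κ → Bool with 2 * #J * Fintype.card ι * p ≤ #(singleHitRows J f),
      ∏ i, ∏ j, bernoulliWeight p (f i j) ≤ Real.exp (-(Fintype.card ι * #J * p / 4)) := by
  have hρ : ∀ r : κ → Bool, 0 ≤ ∏ j, bernoulliWeight p (r j) := fun r =>
    prod_nonneg fun j _ => bernoulliWeight_nonneg hp0 hp1 _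
  refine (sum_prod_le_exp_chernoff hρ sum_prod_bernoulliWeight
    (fun r => #{j ∈ J | r j} = 1) (t := 1) (a := 2 * #J * Fintype.card ι * p) ?_).trans ?_
  · intro f hf
    simpa [singleHitRows] using (mem_filter.1 hf).2
  rw [sum_prod_bernoulliWeight_card_filter_eq_one, Real.exp_le_exp]
  have hpow : (1 - p) ^ (#J - 1) ≤ 1 := pow_le_one₀ (by linarith) (by linarith)
  have he : Real.exp 1 - 1 ≤ 7 / 4 := by linarith [Real.exp_one_lt_d9]
  have he0 : 0 ≤ Real.exp 1 - 1 := by linarith [Real.add_one_le_exp 1]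
  have hm : (0 : ℝ) ≤ Fintype.card ι := Nat.cast_nonneg _
  have hlp : (0 : ℝ) ≤ #J * p := mul_nonneg (Nat.cast_nonneg _) hp0
  have hq : #J * p * (1 - p) ^ (#J - 1) ≤ #J * p := mul_le_of_le_one_right hlp hpow
  nlinarith [mul_nonneg hm hlp, mul_le_mul_of_nonneg_left hq hm,
    mul_le_mul_of_nonneg_left he (mul_nonneg hm hlp)]

end PatternTails

section Transfer

variable {n : ℕ} {p : ℝ}

def Matrix.ofBool (f : Fin n → Fin n → Bool) : Matrix (Fin n) (Fin n) ℝ :=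
  Matrix.of fun i j => if f i j then 1 else 0

lemma prod_prod_bernoulliWeight_eq (f : Fin n → Fin n → Bool) :
    ∏ i, ∏ j, bernoulliWeight p (f i j) =
      p ^ #{ij : Fin n × Fin n | Matrix.ofBool f ij.1 ij.2 = 1} *
        (1 - p) ^ #{ij : Fin n × Fin n | Matrix.ofBool f ij.1 ij.2 = 0} := by
  have hone : ∀ ij : Fin n × Fin n, Matrix.ofBool f ij.1 ij.2 = 1 ↔ f ij.1 ij.2 := by
    intro ij; cases h : f ij.1 ij.2 <;> simp [Matrix.ofBool, h]
  have hzero : ∀ ij : Fin n × Fin n, Matrix.ofBool f ij.1 ij.2 = 0 ↔ ¬f ij.1 ij.2 := by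
    intro ij; cases h : f ij.1 ij.2 <;> simp [Matrix.ofBool, h]
  rw [← Fintype.prod_prod_type' fun i j => bernoulliWeight p (f i j)]
  simp only [hone, hzero, bernoulliWeight, prod_ite, prod_const]

variable {Ω : Type*} [MeasurableSpace Ω] {μ : Measure Ω} [IsFiniteMeasure μ]
  {M : Ω → Matrix (Fin n) (Fin n) ℝ}

theorem IsBernoulliMatrix.measureReal_le_sum (hM : IsBernoulliMatrix μ M p) (hp0 : 0 ≤ p)
    (hp1 : p ≤ 1) (Q : (Fin n → Fin n → Bool) → Prop) [DecidablePred Q] :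
    μ.real {ω | Q fun i j => M ω i j ≠ 0} ≤
      ∑ f with Q f, ∏ i, ∏ j, bernoulliWeight p (f i j) := by
  have hcover : {ω | Q fun i j => M ω i j ≠ 0} ⊆
      ⋃ f ∈ ({f | Q f} : Finset _), {ω | M ω = Matrix.ofBool f} := by
    intro ω hω
    refine Set.mem_biUnion (mem_filter.2 ⟨mem_univ _, hω⟩) ?_
    ext i j
    rcases hM.1 ω i j with h | h <;> simp [Matrix.ofBool, h]
  have hatom : ∀ f, μ.real {ω | M ω = Matrix.ofBool f} = ∏ i, ∏ j, bernoulliWeight p (f i j) := by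
    intro f
    have hentries : ∀ i j, Matrix.ofBool f i j = 0 ∨ Matrix.ofBool f i j = 1 := by
      intro i j; cases f i j <;> simp [Matrix.ofBool]
    rw [measureReal_def, hM.2 _ hentries, ← prod_prod_bernoulliWeight_eq,
      ENNReal.toReal_ofReal (prod_nonneg fun i _ => prod_nonneg fun j _ =>
        bernoulliWeight_nonneg hp0 hp1 _)]
  calc μ.real {ω | Q fun i j => M ω i j ≠ 0}
      ≤ μ.real (⋃ f ∈ ({f | Q f} : Finset _), {ω | M ω = Matrix.ofBool f}) :=
        measureReal_mono hcover (measure_ne_top _ _)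
    _ ≤ _ := (measureReal_biUnion_finset_le _ _).trans_eq (sum_congr rfl fun f _ => hatom f)

end Transfer

lemma one_sub_measureReal_compl_le {Ω : Type*} [MeasurableSpace Ω] {μ : Measure Ω}
    [IsProbabilityMeasure μ] (s : Set Ω) : 1 - μ.real sᶜ ≤ μ.real s := by
  have hsplit : 1 ≤ μ.real s + μ.real sᶜ := by
    simpa [Set.union_compl_self] using measureReal_union_le (μ := μ) s sᶜ
  linarith

section MatrixTails

variable {Ω : Type*} [MeasurableSpace Ω] {μ : Measure Ω} [IsFiniteMeasure μ] {n : ℕ}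
  {M : Ω → Matrix (Fin n) (Fin n) ℝ} {p : ℝ} {l : ℕ}

theorem IsBernoulliMatrix.measureReal_card_singleHitRows_tails_le (hM : IsBernoulliMatrix μ M p)
    (hp0 : 0 ≤ p) (hp1 : p ≤ 1) (hlp : l * p ≤ 1 / 32) {J : Finset (Fin n)} (hJ : #J = l) :
    μ.real {ω | (#(singleHitRows J fun i j => M ω i j ≠ 0) : ℝ) ≤ l * p * n / 16 ∨
        2 * l * n * p ≤ #(singleHitRows J fun i j => M ω i j ≠ 0)} ≤
      2 * Real.exp (-(n * l * p / 4)) := by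
  subst hJ
  have hlower := (hM.measureReal_le_sum hp0 hp1 _).trans
    (sum_bernoulliWeight_card_singleHitRows_le hp0 hp1 hlp)
  have hupper := (hM.measureReal_le_sum hp0 hp1 _).trans
    (sum_bernoulliWeight_le_card_singleHitRows hp0 hp1 J)
  rw [Fintype.card_fin] at hlower hupper
  rw [Set.ofPred_or]
  linarith [measureReal_union_le (μ := μ)
    {ω | (#(singleHitRows J fun i j => M ω i j ≠ 0) : ℝ) ≤ #J * p * n / 16}
    {ω | 2 * #J * n * p ≤ (#(singleHitRows J fun i j => M ω i j ≠ 0) : ℝ)}]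

theorem IsBernoulliMatrix.measureReal_biUnion_card_singleHitRows_tails_le
    (hM : IsBernoulliMatrix μ M p) (hp0 : 0 ≤ p) (hp1 : p ≤ 1) (hlp : l * p ≤ 1 / 32) :
    μ.real (⋃ J ∈ powersetCard l univ, {ω |
        (#(singleHitRows J fun i j => M ω i j ≠ 0) : ℝ) ≤ l * p * n / 16 ∨
          2 * l * n * p ≤ #(singleHitRows J fun i j => M ω i j ≠ 0)}) ≤
      2 * n.choose l * Real.exp (-(n * l * p / 4)) := calc
  _ ≤ ∑ J ∈ powersetCard l univ, 2 * Real.exp (-(n * l * p / 4)) :=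
    (measureReal_biUnion_finset_le _ _).trans (sum_le_sum fun J hJ =>
      hM.measureReal_card_singleHitRows_tails_le hp0 hp1 hlp (mem_powersetCard_univ.1 hJ))
  _ = 2 * n.choose l * Real.exp (-(n * l * p / 4)) := by
    rw [sum_const, card_powersetCard, card_univ, Fintype.card_fin, nsmul_eq_mul]
    ring

end MatrixTails

/-- With high probability, for every `J` of cardinality `ℓ`, the number of rows having exactly
one `1` in the columns indexed by `J` lies in `[ℓpn/16, 2ℓnp]`. -/
theorem row_support_count :
    ∀ n l : ℕ, 1 ≤ l → ∀ p : ℝ, 0 < p → p ≤ 1 / 2 → p * l ≤ 1 / 32 →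
      ∀ (Ω : Type) [MeasurableSpace Ω] (μ : Measure Ω), IsProbabilityMeasure μ →
        ∀ M : Ω → Matrix (Fin n) (Fin n) ℝ, IsBernoulliMatrix μ M p →
          1 - 2 * (n.choose l : ℝ) * Real.exp (-((n : ℝ) * l * p / 4)) ≤
            (μ {ω | ∀ J : Finset (Fin n), J.card = l →
                (l : ℝ) * p * n / 16 ≤
                    ((Finset.univ.filter fun i : Fin n =>
                      (J.filter fun j => M ω i j ≠ 0).card = 1).card : ℝ) ∧
                  ((Finset.univ.filter fun i : Fin n =>
                      (J.filter fun j => M ω i j ≠ 0).card = 1).card : ℝ) ≤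
                    2 * l * n * p}).toReal := by
  intro n l _ p hp hp2 hpl Ω _ μ _ M hM
  rw [← measureReal_def]
  refine le_trans ?_ (one_sub_measureReal_compl_le _)
  gcongr
  refine (measureReal_mono ?_ (measure_ne_top _ _)).trans
    (hM.measureReal_biUnion_card_singleHitRows_tails_le hp.le (by linarith) (by linarith))
  intro ω hω
  simp only [Set.mem_compl_iff, Set.mem_ofPred_eq, not_forall, not_and_or, not_le] at hω
  obtain ⟨J, hJ, hbad⟩ := hω
  simp only [Set.mem_iUnion, mem_powersetCard_univ, exists_prop]
  refine ⟨J, hJ, ?_⟩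
  simp only [singleHitRows, decide_eq_true_eq]
  exact hbad.imp le_of_lt le_of_lt
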